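/- arXiv:math/0304150 — 5 statements merged into one kernel-verified Lean document; each statement's English description precedes it below -/
import Mathlib

section
/- With P = Σ_{i,j} (-1)^[j] E_{ij} ⊗ E_{ji} and Q = Σ_{i,j} (-1)^{[i][j]} θ_i θ_j E_{j̄ī} ⊗ E_{ji} (graded tensor product), one has P Q = Q P = θ₀ Q. -/
namespace RefClass1

open Matrix

/-- The sign `(-1)^x` for a parity `x : ZMod 2`. -/
noncomputable def sgn (x : ZMod 2) : ℂ := (-1 : ℂ) ^ x.val

/-- Graded (Koszul-signed) tensor product of two matrices with respect to a
parity function `p` on the indices. -/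
noncomputable def gkron {N : ℕ} (p : Fin N → ZMod 2)
    (A B : Matrix (Fin N) (Fin N) ℂ) :
    Matrix (Fin N × Fin N) (Fin N × Fin N) ℂ :=
  fun rs cd => sgn ((p rs.2 + p cd.2) * p cd.1) * A rs.1 cd.1 * B rs.2 cd.2

/-- The (super)permutation operator `P = Σ_{i,j} (-1)^[j] E_{ij} ⊗ E_{ji}`. -/
noncomputable def Pop {N : ℕ} (p : Fin N → ZMod 2) :
    Matrix (Fin N × Fin N) (Fin N × Fin N) ℂ :=
  ∑ i : Fin N, ∑ j : Fin N,
    sgn (p j) • gkron p (Matrix.single i j 1) (Matrix.single j i 1)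

/-- The sign `θ_i`: equal to `+1` for `1 ≤ i ≤ m + n/2` and `-1` for
`m + n/2 + 1 ≤ i ≤ m + n` (here in 0-based indexing). -/
noncomputable def thv (m n : ℕ) (i : Fin (m + n)) : ℂ :=
  if (i : ℕ) < m + n / 2 then 1 else -1

/-- The conjugate index `ī`: `ī = m + 1 - i` for `1 ≤ i ≤ m` and
`ī = 2m + n + 1 - i` for `m + 1 ≤ i ≤ m + n` (here in 0-based indexing). -/
def bar (m n : ℕ) (i : Fin (m + n)) : Fin (m + n) :=
  ⟨if (i : ℕ) < m then m - 1 - (i : ℕ) else 2 * m + n - 1 - (i : ℕ), by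
    have := i.isLt; split <;> omega⟩

/-- The operator `Q = Σ_{i,j} (-1)^{[i][j]} θ_i θ_j E_{j̄ī} ⊗ E_{ji}`. -/
noncomputable def Qop (m n : ℕ) (p : Fin (m + n) → ZMod 2) :
    Matrix (Fin (m + n) × Fin (m + n)) (Fin (m + n) × Fin (m + n)) ℂ :=
  ∑ i : Fin (m + n), ∑ j : Fin (m + n),
    (sgn (p i * p j) * thv m n i * thv m n j) •
      gkron p (Matrix.single (bar m n j) (bar m n i) 1) (Matrix.single j i 1)

lemma zmod2_cases (x : ZMod 2) : x = 0 ∨ x = 1 := by revert x; decide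

lemma sgn_inj {x y : ZMod 2} (h : sgn x = sgn y) : x = y := by
  rcases zmod2_cases x with hx | hx <;> rcases zmod2_cases y with hy | hy <;>
    subst hx <;> subst hy <;>
      first
        | rfl
        | (exfalso
           simp only [sgn, show ZMod.val (0 : ZMod 2) = 0 from rfl,
             show ZMod.val (1 : ZMod 2) = 1 by decide, pow_zero, pow_one] at h
           norm_num at h)

lemma sgn_zero : sgn 0 = 1 := by
  simp [sgn, show ZMod.val (0 : ZMod 2) = 0 from rfl]

lemma sgn_sq (x : ZMod 2) : sgn x * sgn x = 1 := by
  rcases zmod2_cases x with h | h <;> subst h <;>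
    simp [sgn, show ZMod.val (0 : ZMod 2) = 0 from rfl,
      show ZMod.val (1 : ZMod 2) = 1 by decide]

lemma zmod2_add_self (x : ZMod 2) : x + x = 0 := by revert x; decide

lemma bar_lt (m n : ℕ) (i : Fin (m + n)) :
    ((bar m n i : Fin (m + n)) : ℕ) < m ↔ (i : ℕ) < m := by
  have := i.isLt
  simp only [bar]
  split <;> omega

lemma bar_bar (m n : ℕ) (i : Fin (m + n)) : bar m n (bar m n i) = i := by
  have := i.isLt
  apply Fin.ext
  simp only [bar]
  split <;> split <;> omega

lemma thv_sq (m n : ℕ) (i : Fin (m + n)) : thv m n i * thv m n i = 1 := by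
  simp only [thv]; split <;> norm_num

lemma p_bar (m n : ℕ) (θ₀ : ℂ) (p : Fin (m + n) → ZMod 2)
    (hp : ∀ i : Fin (m + n), sgn (p i) = if (i : ℕ) < m then θ₀ else -θ₀)
    (i : Fin (m + n)) : p (bar m n i) = p i := by
  apply sgn_inj
  rw [hp, hp]
  by_cases h : (i : ℕ) < m
  · rw [if_pos h, if_pos ((bar_lt m n i).mpr h)]
  · rw [if_neg h, if_neg (fun hc => h ((bar_lt m n i).mp hc))]

lemma thv_mul_bar (m n : ℕ) (hn : Even n) (θ₀ : ℂ) (hθ : θ₀ = 1 ∨ θ₀ = -1)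
    (p : Fin (m + n) → ZMod 2)
    (hp : ∀ i : Fin (m + n), sgn (p i) = if (i : ℕ) < m then θ₀ else -θ₀)
    (i : Fin (m + n)) :
    thv m n i * thv m n (bar m n i) = θ₀ * sgn (p i) := by
  obtain ⟨k, hk⟩ := hn
  have hi := i.isLt
  rw [hp i]
  simp only [thv, bar]
  rcases hθ with h | h <;> subst h <;> split_ifs <;> try norm_num
  all_goals omega

lemma Pop_apply {N : ℕ} (p : Fin N → ZMod 2) (r s c d : Fin N) :
    Pop p (r, s) (c, d) =
      if c = s ∧ d = r then sgn (p s) * sgn ((p s + p d) * p c) else 0 := by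
  unfold Pop
  simp only [Matrix.sum_apply, Matrix.smul_apply, gkron, Matrix.single, Matrix.of_apply,
    smul_eq_mul]
  rw [Finset.sum_eq_single d]
  · rw [Finset.sum_eq_single c]
    · by_cases h1 : c = s <;> by_cases h2 : d = r <;> simp [h1, h2]
    · intro b _ hb; simp [hb, Ne.symm hb]
    · simp
  · intro b _ hb
    rw [Finset.sum_eq_zero]; intro j _
    simp [hb, Ne.symm hb]
  · simp

lemma Qop_apply (m n : ℕ) (p : Fin (m + n) → ZMod 2) (r s c d : Fin (m + n)) :
    Qop m n p (r, s) (c, d) =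
      if r = bar m n s ∧ c = bar m n d then
        sgn (p d * p s) * thv m n d * thv m n s * sgn ((p s + p d) * p c)
      else 0 := by
  unfold Qop
  simp only [Matrix.sum_apply, Matrix.smul_apply, gkron, Matrix.single, Matrix.of_apply,
    smul_eq_mul]
  rw [Finset.sum_eq_single d]
  · rw [Finset.sum_eq_single s]
    · by_cases h1 : r = bar m n s <;> by_cases h2 : c = bar m n d
      · simp only [h1, h2, if_pos rfl, and_self, if_true]; ring
      · simp [h1, h2, Ne.symm h2]
      · simp [h1, h2, Ne.symm h1]
      · simp [h1, h2, Ne.symm h1]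
    · intro b _ hb; simp [hb, Ne.symm hb]
    · simp
  · intro b _ hb
    rw [Finset.sum_eq_zero]; intro j _
    simp [hb, Ne.symm hb]
  · simp

/-- `P Q = Q P = θ₀ Q` in the `gl(m|n)` setting with `n` even. -/
theorem PQ_QP (m n : ℕ) (hn : Even n) (θ₀ : ℂ) (hθ : θ₀ = 1 ∨ θ₀ = -1)
    (p : Fin (m + n) → ZMod 2)
    (hp : ∀ i : Fin (m + n), sgn (p i) = if (i : ℕ) < m then θ₀ else -θ₀) :
    Pop p * Qop m n p = θ₀ • Qop m n p ∧
      Qop m n p * Pop p = θ₀ • Qop m n p := by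
  have hθ2 : θ₀ * θ₀ = 1 := by rcases hθ with h | h <;> rw [h] <;> norm_num
  constructor
  · ext x y
    obtain ⟨r, s⟩ := x
    obtain ⟨c, d⟩ := y
    rw [Matrix.mul_apply, Matrix.smul_apply, smul_eq_mul, Fintype.sum_prod_type]
    rw [Finset.sum_eq_single s]
    · rw [Finset.sum_eq_single r]
      · rw [Pop_apply, Qop_apply, Qop_apply, if_pos ⟨rfl, rfl⟩]
        by_cases h1 : r = bar m n s
        · have h1' : s = bar m n r := by rw [h1, bar_bar]
          by_cases h2 : c = bar m n d
          · rw [if_pos ⟨h1'.symm ▸ rfl, h2⟩, if_pos ⟨h1, h2⟩]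
            have hpr : p r = p s := by rw [h1]; exact p_bar m n θ₀ p hp s
            rw [hpr, zmod2_add_self, zero_mul, sgn_zero, mul_one]
            have h := thv_mul_bar m n hn θ₀ hθ p hp s
            rw [← h1] at h
            have key : sgn (p s) * thv m n r = θ₀ * thv m n s := by
              linear_combination (sgn (p s) * thv m n s) * h
                + (-(sgn (p s) * thv m n r)) * thv_sq m n s
                + (θ₀ * thv m n s) * sgn_sq (p s)
            linear_combination
              (sgn (p d * p s) * thv m n d * sgn ((p s + p d) * p c)) * key
          · rw [if_neg (fun hc => h2 hc.2), if_neg (fun hc => h2 hc.2)]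
            ring
        · have h1' : ¬ s = bar m n r := fun hc => h1 (by rw [hc, bar_bar])
          rw [if_neg (fun hc => h1' hc.1), if_neg (fun hc => h1 hc.1)]
          ring
      · intro b _ hb
        rw [Pop_apply, if_neg (fun hc => hb hc.2), zero_mul]
      · simp
    · intro b _ hb
      rw [Finset.sum_eq_zero]
      intro v _
      rw [Pop_apply, if_neg (fun hc => hb hc.1), zero_mul]
    · simp
  · ext x y
    obtain ⟨r, s⟩ := x
    obtain ⟨c, d⟩ := y
    rw [Matrix.mul_apply, Matrix.smul_apply, smul_eq_mul, Fintype.sum_prod_type]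
    rw [Finset.sum_eq_single d]
    · rw [Finset.sum_eq_single c]
      · rw [Qop_apply, Pop_apply, Qop_apply,
          if_pos (show c = c ∧ d = d from ⟨rfl, rfl⟩)]
        by_cases h2 : c = bar m n d
        · have h2' : d = bar m n c := by rw [h2, bar_bar]
          by_cases h1 : r = bar m n s
          · rw [if_pos (show r = bar m n s ∧ d = bar m n c from ⟨h1, h2'⟩),
              if_pos (show r = bar m n s ∧ c = bar m n d from ⟨h1, h2⟩)]
            have hpc : p c = p d := by rw [h2]; exact p_bar m n θ₀ p hp d
            rw [hpc, zmod2_add_self, zero_mul, sgn_zero, mul_one]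
            have h := thv_mul_bar m n hn θ₀ hθ p hp c
            rw [← h2', hpc] at h
            have key : sgn (p d) * thv m n c = θ₀ * thv m n d := by
              linear_combination (sgn (p d) * thv m n d) * h
                + (-(sgn (p d) * thv m n c)) * thv_sq m n d
                + (θ₀ * thv m n d) * sgn_sq (p d)
            linear_combination
              (sgn (p d * p s) * thv m n s * sgn ((p s + p d) * p d)) * key
          · rw [if_neg (show ¬(r = bar m n s ∧ d = bar m n c) from fun hc => h1 hc.1),
              if_neg (show ¬(r = bar m n s ∧ c = bar m n d) from fun hc => h1 hc.1)]
            ring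
        · have h2' : ¬ d = bar m n c := fun hc => h2 (by rw [hc, bar_bar])
          rw [if_neg (show ¬(r = bar m n s ∧ d = bar m n c) from fun hc => h2' hc.2),
            if_neg (show ¬(r = bar m n s ∧ c = bar m n d) from fun hc => h2 hc.2)]
          ring
      · intro b _ hb
        rw [Pop_apply, if_neg (fun hc => hb hc.1.symm), mul_zero]
      · simp
    · intro b _ hb
      rw [Finset.sum_eq_zero]
      intro v _
      rw [Pop_apply, if_neg (fun hc => hb hc.2.symm), mul_zero]
    · simp

end RefClass1
end

section
/- Let N ≥ 5 and let c_{ij} ∈ ℂ be defined for pairs (i,j) with i ≠ j, ī, j̄ (where i ↦ ī is a fixed-point-free involution pairing index i with N+1−i), antisymmetric c_{ji} = −c_{ij}, and satisfying c_{ij} + c_{jk} + c_{ki} = 0 and c_{ij}c_{jk}c_{ki} = 0 whenever all three pairs are admissible (i ≠ j,j̄; j ≠ k,k̄; k ≠ i,ī). Extend the relation i ≡ j ⟺ c_{ij} = 0 (for admissible pairs). Then any partition of {1,…,N} compatible with these constraints has at most three classes. -/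
namespace RefClass9

/-- A pair of indices `(i, j)` is admissible when `i ≠ j` and `i ≠ j̄`, where
`j ↦ j̄` is the involution pairing `j` with `N + 1 − j` (i.e. `Fin.rev`). -/
def Adm {N : ℕ} (i j : Fin N) : Prop := i ≠ j ∧ i ≠ j.rev

lemma rev_ne_symm {N : ℕ} {i j : Fin N} (h : i ≠ j.rev) : j ≠ i.rev := by
  intro h'
  exact h (by rw [h', Fin.rev_rev])

lemma exists_fifth {N : ℕ} (hN : 5 ≤ N) (w x y z : Fin N) :
    ∃ e : Fin N, e ≠ w ∧ e ≠ x ∧ e ≠ y ∧ e ≠ z := by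
  by_contra h
  push_neg at h
  have hsub : (Finset.univ : Finset (Fin N)) ⊆ {w, x, y, z} := by
    intro i _
    simp only [Finset.mem_insert, Finset.mem_singleton]
    by_contra hi
    push_neg at hi
    exact hi.2.2.2 (h i hi.1 hi.2.1 hi.2.2.1)
  have h1 := Finset.card_le_card hsub
  have h2 : ({w, x, y, z} : Finset (Fin N)).card ≤ 4 := by
    apply le_trans (Finset.card_insert_le _ _)
    have := Finset.card_insert_le x ({y, z} : Finset (Fin N))
    have := Finset.card_insert_le y ({z} : Finset (Fin N))
    simp_all
    omega
  simp [Finset.card_univ] at h1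
  omega

section

variable {N : ℕ} {cc : Fin N → Fin N → ℂ} {r : Fin N → Fin N → Prop}

/-- On any fully admissible triangle, some pair is related. -/
lemma tri (hcoc : ∀ i j k : Fin N, Adm i j → Adm j k → Adm k i →
      cc i j + cc j k + cc k i = 0 ∧ cc i j * cc j k * cc k i = 0)
    (hcompat : ∀ i j, Adm i j → (r i j ↔ cc i j = 0))
    (x y z : Fin N) (hxy : x ≠ y) (hyz : y ≠ z) (hzx : z ≠ x)
    (hxy' : x ≠ y.rev) (hyz' : y ≠ z.rev) (hzx' : z ≠ x.rev) :
    r x y ∨ r y z ∨ r z x := by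
  have h := (hcoc x y z ⟨hxy, hxy'⟩ ⟨hyz, hyz'⟩ ⟨hzx, hzx'⟩).2
  rcases mul_eq_zero.1 h with h | h
  · rcases mul_eq_zero.1 h with h | h
    · exact Or.inl ((hcompat x y ⟨hxy, hxy'⟩).2 h)
    · exact Or.inr (Or.inl ((hcompat y z ⟨hyz, hyz'⟩).2 h))
  · exact Or.inr (Or.inr ((hcompat z x ⟨hzx, hzx'⟩).2 h))

/-- The doubly matched case: `x = w̄`, `z = ȳ`.  Use a fifth point. -/
lemma pair4 (hN : 5 ≤ N)
    (hcoc : ∀ i j k : Fin N, Adm i j → Adm j k → Adm k i →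
      cc i j + cc j k + cc k i = 0 ∧ cc i j * cc j k * cc k i = 0)
    (hr : Equivalence r)
    (hcompat : ∀ i j, Adm i j → (r i j ↔ cc i j = 0))
    (w x y z : Fin N)
    (hwx : w ≠ x) (hwy : w ≠ y) (hwz : w ≠ z)
    (hxy : x ≠ y) (hxz : x ≠ z) (hyz : y ≠ z)
    (hx : x = w.rev) (hz : z = y.rev) :
    r w x ∨ r w y ∨ r w z ∨ r x y ∨ r x z ∨ r y z := by
  obtain ⟨e, hew, hex, hey, hez⟩ := exists_fifth hN w x y z
  -- triangle (w, y, e)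
  have t1 : r w y ∨ r y e ∨ r e w := by
    apply tri hcoc hcompat
    · exact hwy
    · exact hey.symm
    · exact hew
    · rw [← hz]; exact hwz
    · intro h
      exact hez (by rw [hz, ← Fin.rev_rev e, ← h])
    · rw [← hx]; exact hex
  -- triangle (x, z, e)
  have t2 : r x z ∨ r z e ∨ r e x := by
    apply tri hcoc hcompat
    · exact hxz
    · exact hez.symm
    · exact hex
    · rw [hz, Fin.rev_rev]; exact hxy
    · intro h
      exact hey (by rw [hz] at h; rw [← Fin.rev_rev e, ← h, Fin.rev_rev])
    · rw [hx, Fin.rev_rev]; exact hew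
  rcases t1 with h1 | h1 | h1
  · exact Or.inr (Or.inl h1)
  · rcases t2 with h2 | h2 | h2
    · exact Or.inr (Or.inr (Or.inr (Or.inr (Or.inl h2))))
    · exact Or.inr (Or.inr (Or.inr (Or.inr (Or.inr (hr.trans h1 (hr.symm h2))))))
    · exact Or.inr (Or.inr (Or.inr (Or.inl (hr.symm (hr.trans h1 h2)))))
  · rcases t2 with h2 | h2 | h2
    · exact Or.inr (Or.inr (Or.inr (Or.inr (Or.inl h2))))
    · exact Or.inr (Or.inr (Or.inl (hr.symm (hr.trans h2 h1))))
    · exact Or.inl (hr.trans (hr.symm h1) h2)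

end

/-- For `N ≥ 5`, suppose `c_{ij} ∈ ℂ` is given for admissible pairs,
antisymmetric, and satisfies `c_{ij} + c_{jk} + c_{ki} = 0` and
`c_{ij} c_{jk} c_{ki} = 0` whenever all three pairs are admissible. Then any
equivalence relation `r` on `{1,…,N}` compatible with these constraints
(`r i j ↔ c_{ij} = 0` on admissible pairs) has at most three classes: among
any four indices, two are equivalent. -/
theorem at_most_three_classes (N : ℕ) (hN : 5 ≤ N)
    (cc : Fin N → Fin N → ℂ)
    (hanti : ∀ i j, Adm i j → cc j i = - cc i j)
    (hcoc : ∀ i j k : Fin N, Adm i j → Adm j k → Adm k i →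
      cc i j + cc j k + cc k i = 0 ∧ cc i j * cc j k * cc k i = 0)
    (r : Fin N → Fin N → Prop) (hr : Equivalence r)
    (hcompat : ∀ i j, Adm i j → (r i j ↔ cc i j = 0)) :
    ∀ a b c d : Fin N,
      r a b ∨ r a c ∨ r a d ∨ r b c ∨ r b d ∨ r c d := by
  intro a b c d
  -- dispose of equal indices first
  rcases eq_or_ne a b with h | hab
  · exact Or.inl (h ▸ hr.refl a)
  rcases eq_or_ne a c with h | hac
  · exact Or.inr (Or.inl (h ▸ hr.refl a))
  rcases eq_or_ne a d with h | had
  · exact Or.inr (Or.inr (Or.inl (h ▸ hr.refl a)))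
  rcases eq_or_ne b c with h | hbc
  · exact Or.inr (Or.inr (Or.inr (Or.inl (h ▸ hr.refl b))))
  rcases eq_or_ne b d with h | hbd
  · exact Or.inr (Or.inr (Or.inr (Or.inr (Or.inl (h ▸ hr.refl b)))))
  rcases eq_or_ne c d with h | hcd
  · exact Or.inr (Or.inr (Or.inr (Or.inr (Or.inr (h ▸ hr.refl c)))))
  by_cases hab' : b = a.rev
  · -- {a,b} matched; then c, d are not the conjugate of a
    have hca' : c ≠ a.rev := fun h => hbc (hab'.trans h.symm)
    have hda' : d ≠ a.rev := fun h => hbd (hab'.trans h.symm)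
    by_cases hcd' : d = c.rev
    · exact pair4 hN hcoc hr hcompat a b c d hab hac had hbc hbd hcd hab' hcd'
    · -- triangle (a, c, d)
      rcases tri hcoc hcompat a c d hac hcd had.symm
          (rev_ne_symm hca') (rev_ne_symm hcd') hda' with h | h | h
      · exact Or.inr (Or.inl h)
      · exact Or.inr (Or.inr (Or.inr (Or.inr (Or.inr h))))
      · exact Or.inr (Or.inr (Or.inl (hr.symm h)))
  · have hba' : a ≠ b.rev := rev_ne_symm hab'
    by_cases hbc' : c = b.rev
    · have hdb' : d ≠ b.rev := fun h => hcd (hbc'.trans h.symm)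
      by_cases had' : d = a.rev
      · rcases pair4 hN hcoc hr hcompat b c a d hbc hab.symm hbd hac.symm hcd had
            hbc' had' with h | h | h | h | h | h
        · exact Or.inr (Or.inr (Or.inr (Or.inl h)))
        · exact Or.inl (hr.symm h)
        · exact Or.inr (Or.inr (Or.inr (Or.inr (Or.inl h))))
        · exact Or.inr (Or.inl (hr.symm h))
        · exact Or.inr (Or.inr (Or.inr (Or.inr (Or.inr h))))
        · exact Or.inr (Or.inr (Or.inl h))
      · -- triangle (a, b, d)
        rcases tri hcoc hcompat a b d hab hbd had.symm
            hba' (rev_ne_symm hdb') had' with h | h | h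
        · exact Or.inl h
        · exact Or.inr (Or.inr (Or.inr (Or.inr (Or.inl h))))
        · exact Or.inr (Or.inr (Or.inl (hr.symm h)))
    · by_cases hac' : c = a.rev
      · by_cases hbd' : d = b.rev
        · rcases pair4 hN hcoc hr hcompat a c b d hac hab had hbc.symm hcd hbd
              hac' hbd' with h | h | h | h | h | h
          · exact Or.inr (Or.inl h)
          · exact Or.inl h
          · exact Or.inr (Or.inr (Or.inl h))
          · exact Or.inr (Or.inr (Or.inr (Or.inl (hr.symm h))))
          · exact Or.inr (Or.inr (Or.inr (Or.inr (Or.inr h))))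
          · exact Or.inr (Or.inr (Or.inr (Or.inr (Or.inl h))))
        · -- triangle (b, c, d)
          have hdc' : d ≠ c.rev := by
            intro h
            exact had (by rw [h, hac', Fin.rev_rev])
          rcases tri hcoc hcompat b c d hbc hcd hbd.symm
              (rev_ne_symm hbc') (rev_ne_symm hdc') hbd' with h | h | h
          · exact Or.inr (Or.inr (Or.inr (Or.inl h)))
          · exact Or.inr (Or.inr (Or.inr (Or.inr (Or.inr h))))
          · exact Or.inr (Or.inr (Or.inr (Or.inr (Or.inl (hr.symm h)))))
      · -- triangle (a, b, c)
        rcases tri hcoc hcompat a b c hab hbc hac.symm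
            hba' (rev_ne_symm hbc') hac' with h | h | h
        · exact Or.inl h
        · exact Or.inr (Or.inr (Or.inr (Or.inl h)))
        · exact Or.inr (Or.inl (hr.symm h))

end RefClass9
end

section
/- Let m be even and consider the so(m) rational R matrix (n = 0). A constant antidiagonal matrix K = Σ_{i=1}^{m} ℓ_i E_{i,ī} (with ī = m+1−i, all ℓ_i ≠ 0) solves the reflection equation if and only if ℓ_i ℓ_ī = ℓ_j ℓ_j̄ for all i, j, and, after normalizing the common value to 1, ℓ_i ℓ_ī = 1 for all i. -/
namespace RefClass15

open Matrix

/-- The conjugate index `ī = m + 1 - i` (0-based: `m - 1 - i`). -/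
def barso (m : ℕ) (i : Fin m) : Fin m := ⟨m - 1 - (i : ℕ), by have := i.isLt; omega⟩

/-- Kronecker (tensor) product of matrices on `ℂ^m ⊗ ℂ^m`. -/
noncomputable def kron {m : ℕ} (A B : Matrix (Fin m) (Fin m) ℂ) :
    Matrix (Fin m × Fin m) (Fin m × Fin m) ℂ :=
  fun r c => A r.1 c.1 * B r.2 c.2

/-- The permutation operator `P = Σ_{i,j} E_{ij} ⊗ E_{ji}`. -/
noncomputable def Pm (m : ℕ) : Matrix (Fin m × Fin m) (Fin m × Fin m) ℂ :=
  fun r c => if r.1 = c.2 ∧ r.2 = c.1 then 1 else 0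

/-- The operator `Q = P^{t₁} = Σ_{i,j} E_{j̄ī} ⊗ E_{ji}` (all signs `θ_i`
trivialize in the `so(m)` case). -/
noncomputable def Qm (m : ℕ) : Matrix (Fin m × Fin m) (Fin m × Fin m) ℂ :=
  fun r c => if r.1 = barso m r.2 ∧ c.1 = barso m c.2 then 1 else 0

/-- The rational `so(m)` R matrix `R(u) = I + P/u − Q/(u+κ)`. -/
noncomputable def Rmat (m : ℕ) (κ u : ℂ) :
    Matrix (Fin m × Fin m) (Fin m × Fin m) ℂ :=
  1 + u⁻¹ • Pm m - (u + κ)⁻¹ • Qm m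

/-- A constant matrix `K` solves the reflection equation
`R₁₂(u−v)K₁R₁₂(u+v)K₂ = K₂R₁₂(u+v)K₁R₁₂(u−v)` (at all generic `u, v`). -/
def ConstSol (m : ℕ) (κ : ℂ) (K : Matrix (Fin m) (Fin m) ℂ) : Prop :=
  ∀ u v : ℂ, u ≠ v → u + v ≠ 0 → u - v + κ ≠ 0 → u + v + κ ≠ 0 →
    Rmat m κ (u - v) * kron K 1 * Rmat m κ (u + v) * kron 1 K
      = kron 1 K * Rmat m κ (u + v) * kron K 1 * Rmat m κ (u - v)

lemma barbar (m : ℕ) (i : Fin m) : barso m (barso m i) = i := by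
  have := i.isLt; simp only [barso]; ext; simp; omega
lemma bar_eq_bar {m : ℕ} {i j : Fin m} : barso m i = barso m j ↔ i = j := by
  constructor
  · intro h; have := congrArg (barso m) h; rwa [barbar, barbar] at this
  · rintro rfl; rfl
lemma bar_ne (m : ℕ) (hm : Even m) (i : Fin m) : barso m i ≠ i := by
  obtain ⟨k, hk⟩ := hm; have := i.isLt
  simp only [barso, Fin.ne_iff_vne]; simp; omega

noncomputable def Km (m : ℕ) (ℓ : Fin m → ℂ) : Matrix (Fin m) (Fin m) ℂ :=
  ∑ i : Fin m, ℓ i • single i (barso m i) (1 : ℂ)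
lemma Kapp (m : ℕ) (ℓ : Fin m → ℂ) (a b : Fin m) :
    Km m ℓ a b = if b = barso m a then ℓ a else 0 := by
  simp only [Km, Matrix.sum_apply, Matrix.smul_apply, Matrix.single, smul_eq_mul]
  rw [Finset.sum_eq_single a]
  · simp [eq_comm]
  · intro i _ hi; simp [hi]
  · simp
lemma Kapp' (m : ℕ) (ℓ : Fin m → ℂ) (a b : Fin m) :
    Km m ℓ a b = if a = barso m b then ℓ (barso m b) else 0 := by
  rw [Kapp]
  by_cases h : b = barso m a
  · subst h; simp [barbar]
  · rw [if_neg h, if_neg]; intro h2; exact h (by rw [h2, barbar])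

noncomputable def QK (m : ℕ) (ℓ : Fin m → ℂ) : Matrix (Fin m × Fin m) (Fin m × Fin m) ℂ :=
  fun r c => if r.1 = barso m r.2 ∧ c.2 = c.1 then ℓ (barso m c.1) else 0
noncomputable def KQ (m : ℕ) (ℓ : Fin m → ℂ) : Matrix (Fin m × Fin m) (Fin m × Fin m) ℂ :=
  fun r c => if r.1 = r.2 ∧ c.1 = barso m c.2 then ℓ r.1 else 0
noncomputable def Nm (m : ℕ) (ℓ : Fin m → ℂ) : Matrix (Fin m × Fin m) (Fin m × Fin m) ℂ :=
  fun r c => if r.1 = r.2 ∧ c.1 = c.2 then ℓ r.1 * ℓ (barso m c.1) else 0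
noncomputable def E1 (m : ℕ) (ℓ : Fin m → ℂ) : Matrix (Fin m × Fin m) (Fin m × Fin m) ℂ :=
  fun r c => if r.1 = barso m r.2 ∧ c.1 = barso m c.2 then ℓ c.1 * ℓ (barso m c.1) else 0
noncomputable def E2 (m : ℕ) (ℓ : Fin m → ℂ) : Matrix (Fin m × Fin m) (Fin m × Fin m) ℂ :=
  fun r c => if r.1 = barso m r.2 ∧ c.1 = barso m c.2 then ℓ r.1 * ℓ (barso m r.1) else 0
noncomputable def Kt (m : ℕ) (ℓ : Fin m → ℂ) : Matrix (Fin m) (Fin m) ℂ :=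
  fun b d => if d = b then ℓ b * ℓ (barso m b) else 0

section prods
variable (m : ℕ) (ℓ : Fin m → ℂ)

lemma kron_mul_kron (A B A' B' : Matrix (Fin m) (Fin m) ℂ) :
    kron A B * kron A' B' = kron (A * A') (B * B') := by
  ext ⟨a,b⟩ ⟨c,d⟩
  simp only [kron, mul_apply, Fintype.sum_prod_type]
  rw [Finset.sum_mul_sum]
  exact Finset.sum_congr rfl fun x _ => Finset.sum_congr rfl fun y _ => by ring

lemma mul_P_apply (M : Matrix (Fin m × Fin m) (Fin m × Fin m) ℂ)
    (r c : Fin m × Fin m) : (M * Pm m) r c = M r (c.2, c.1) := by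
  simp [mul_apply, Pm, Fintype.sum_prod_type, ite_and, mul_ite, mul_zero, mul_one,
    Finset.sum_ite_eq, Finset.sum_ite_eq']

lemma P_mul_apply (M : Matrix (Fin m × Fin m) (Fin m × Fin m) ℂ)
    (r c : Fin m × Fin m) : (Pm m * M) r c = M (r.2, r.1) c := by
  simp [mul_apply, Pm, Fintype.sum_prod_type, ite_and, ite_mul, zero_mul, one_mul,
    Finset.sum_ite_eq, Finset.sum_ite_eq']

lemma P_mul_P : Pm m * Pm m = 1 := by
  ext r c
  rw [P_mul_apply]
  simp only [Pm, one_apply, Prod.ext_iff]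
  rcases r with ⟨a,b⟩; rcases c with ⟨c,d⟩
  simp [and_comm]

lemma P_mul_kron1 (A : Matrix (Fin m) (Fin m) ℂ) :
    Pm m * kron A 1 = kron 1 A * Pm m := by
  ext r c; rw [P_mul_apply, mul_P_apply]; simp only [kron]; ring

lemma P_mul_kron2 (A : Matrix (Fin m) (Fin m) ℂ) :
    Pm m * kron 1 A = kron A 1 * Pm m := by
  ext r c; rw [P_mul_apply, mul_P_apply]; simp only [kron]; ring

lemma P_mul_Q : Pm m * Qm m = Qm m := by
  ext r c; rw [P_mul_apply]
  simp only [Qm]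
  exact if_congr (and_congr_left' (by constructor <;> (intro h; rw [h, barbar]))) rfl rfl

lemma Q_mul_P : Qm m * Pm m = Qm m := by
  ext r c; rw [mul_P_apply]
  simp only [Qm]
  exact if_congr (and_congr_right' (by constructor <;> (intro h; rw [h, barbar]))) rfl rfl

lemma Q_mul_K1 : Qm m * kron (Km m ℓ) 1 = QK m ℓ := by
  ext ⟨a,b⟩ ⟨c,d⟩
  simp only [mul_apply, kron, Qm, QK, Kapp', one_apply, Fintype.sum_prod_type, ite_and,
    ite_mul, mul_ite, mul_zero, zero_mul, mul_one, one_mul,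
    Finset.sum_ite_eq, Finset.sum_ite_eq', Finset.mem_univ, if_true, barbar]
  split_ifs <;> simp_all [bar_eq_bar, barbar, Finset.sum_ite_eq, Finset.sum_ite_eq']

lemma Q_mul_K2 : Qm m * kron 1 (Km m ℓ) = QK m ℓ := by
  ext ⟨a,b⟩ ⟨c,d⟩
  simp only [mul_apply, kron, Qm, QK, Kapp', one_apply, Fintype.sum_prod_type, ite_and,
    ite_mul, mul_ite, mul_zero, zero_mul, mul_one, one_mul,
    Finset.sum_ite_eq, Finset.sum_ite_eq', Finset.mem_univ, if_true, barbar]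
  split_ifs <;> simp_all [bar_eq_bar, barbar, Finset.sum_ite_eq, Finset.sum_ite_eq']

lemma K1_mul_Q : kron (Km m ℓ) 1 * Qm m = KQ m ℓ := by
  ext ⟨a,b⟩ ⟨c,d⟩
  simp only [mul_apply, Fintype.sum_prod_type]
  rw [Finset.sum_comm]
  simp only [kron, Qm, KQ, Kapp, one_apply, ite_and,
    ite_mul, mul_ite, mul_zero, zero_mul, mul_one, one_mul,
    Finset.sum_ite_eq, Finset.sum_ite_eq', Finset.mem_univ, if_true, barbar]
  split_ifs <;> simp_all [bar_eq_bar, barbar, Finset.sum_ite_eq, Finset.sum_ite_eq']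
  · rintro rfl; simp_all

lemma K2_mul_Q : kron 1 (Km m ℓ) * Qm m = KQ m ℓ := by
  ext ⟨a,b⟩ ⟨c,d⟩
  simp only [mul_apply, Fintype.sum_prod_type]
  rw [Finset.sum_comm]
  simp only [kron, Qm, KQ, Kapp, one_apply, ite_and,
    ite_mul, mul_ite, mul_zero, zero_mul, mul_one, one_mul,
    Finset.sum_ite_eq, Finset.sum_ite_eq', Finset.mem_univ, if_true, barbar]
  split_ifs <;> simp_all [bar_eq_bar, barbar, Finset.sum_ite_eq, Finset.sum_ite_eq']

lemma QK_mul_P : QK m ℓ * Pm m = QK m ℓ := by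
  ext ⟨a,b⟩ ⟨c,d⟩
  rw [mul_P_apply]
  simp only [QK]
  rcases eq_or_ne d c with rfl | h
  · rfl
  · rw [if_neg (fun hh => by simp [hh.2] at h), if_neg (fun hh => by simp [hh.2] at h)]

lemma N_mul_P : Nm m ℓ * Pm m = Nm m ℓ := by
  ext ⟨a,b⟩ ⟨c,d⟩
  rw [mul_P_apply]
  simp only [Nm]
  rcases eq_or_ne d c with rfl | h
  · rfl
  · rw [if_neg (fun hh => by simp [hh.2] at h), if_neg (fun hh => by simp [hh.2] at h)]

lemma QK_mul_Q (hm : Even m) : QK m ℓ * Qm m = 0 := by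
  ext ⟨a,b⟩ ⟨c,d⟩
  simp only [mul_apply, QK, Qm, Matrix.zero_apply]
  apply Finset.sum_eq_zero
  rintro ⟨x,y⟩ _
  by_cases h1 : y = x
  · by_cases h2 : x = barso m y
    · exfalso; rw [h1] at h2; exact bar_ne m hm x h2.symm
    · simp [h2]
  · simp [h1]

lemma N_mul_Q (hm : Even m) : Nm m ℓ * Qm m = 0 := by
  ext ⟨a,b⟩ ⟨c,d⟩
  simp only [mul_apply, Nm, Qm, Matrix.zero_apply]
  apply Finset.sum_eq_zero
  rintro ⟨x,y⟩ _
  by_cases h1 : x = y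
  · by_cases h2 : x = barso m y
    · exfalso; rw [h1] at h2; exact bar_ne m hm y h2.symm
    · simp [h2]
  · simp [h1]

lemma QK_mul_K2 : QK m ℓ * kron 1 (Km m ℓ) = E1 m ℓ := by
  ext ⟨a,b⟩ ⟨c,d⟩
  simp only [mul_apply, kron, QK, E1, Kapp', one_apply, Fintype.sum_prod_type, ite_and,
    ite_mul, mul_ite, mul_zero, zero_mul, mul_one, one_mul,
    Finset.sum_ite_eq, Finset.sum_ite_eq', Finset.mem_univ, if_true, barbar]
  split_ifs <;> simp_all [bar_eq_bar, barbar, Finset.sum_ite_eq, Finset.sum_ite_eq', mul_comm]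

lemma KQ_mul_K1 : KQ m ℓ * kron (Km m ℓ) 1 = Nm m ℓ := by
  ext ⟨a,b⟩ ⟨c,d⟩
  simp only [mul_apply, kron, KQ, Nm, Kapp', one_apply, Fintype.sum_prod_type, ite_and,
    ite_mul, mul_ite, mul_zero, zero_mul, mul_one, one_mul,
    Finset.sum_ite_eq, Finset.sum_ite_eq', Finset.mem_univ, if_true, barbar]
  split_ifs <;> simp_all [bar_eq_bar, barbar, Finset.sum_ite_eq, Finset.sum_ite_eq']

lemma KQ_mul_K2 : KQ m ℓ * kron 1 (Km m ℓ) = Nm m ℓ := by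
  ext ⟨a,b⟩ ⟨c,d⟩
  simp only [mul_apply, kron, KQ, Nm, Kapp', one_apply, Fintype.sum_prod_type, ite_and,
    ite_mul, mul_ite, mul_zero, zero_mul, mul_one, one_mul,
    Finset.sum_ite_eq, Finset.sum_ite_eq', Finset.mem_univ, if_true, barbar]
  split_ifs <;> simp_all [bar_eq_bar, barbar, Finset.sum_ite_eq, Finset.sum_ite_eq']

lemma Km_mul_Km : Km m ℓ * Km m ℓ = Kt m ℓ := by
  ext a d
  simp only [mul_apply, Kt]
  rw [Finset.sum_eq_single (barso m a)]
  · rw [Kapp, Kapp, if_pos rfl, barbar]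
    split_ifs <;> simp_all [eq_comm]
  · intro x _ hx
    rw [Kapp, if_neg (fun hh => hx hh), zero_mul]
  · simp

lemma C_mul_Q : kron (Km m ℓ) (Km m ℓ) * Qm m = E2 m ℓ := by
  ext ⟨a,b⟩ ⟨c,d⟩
  simp only [mul_apply, Fintype.sum_prod_type]
  rw [Finset.sum_comm]
  simp only [kron, Qm, E2, Kapp, ite_and,
    ite_mul, mul_ite, mul_zero, zero_mul, mul_one, one_mul,
    Finset.sum_ite_eq, Finset.sum_ite_eq', Finset.mem_univ, if_true, barbar]
  split_ifs <;> (try simp_all [bar_eq_bar, barbar, Finset.sum_ite_eq, Finset.sum_ite_eq'])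
  all_goals (rintro rfl; simp_all [barbar])

lemma S_mul_Q : kron 1 (Kt m ℓ) * Qm m = E2 m ℓ := by
  ext ⟨a,b⟩ ⟨c,d⟩
  simp only [mul_apply, Fintype.sum_prod_type]
  rw [Finset.sum_comm]
  simp only [kron, Qm, E2, Kt, one_apply, ite_and,
    ite_mul, mul_ite, mul_zero, zero_mul, mul_one, one_mul,
    Finset.sum_ite_eq, Finset.sum_ite_eq', Finset.mem_univ, if_true, barbar]
  split_ifs <;> simp_all [bar_eq_bar, barbar, Finset.sum_ite_eq, Finset.sum_ite_eq'] <;> try ring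

lemma K1_mul_K2 : kron (Km m ℓ) 1 * kron 1 (Km m ℓ) = kron (Km m ℓ) (Km m ℓ) := by
  rw [kron_mul_kron, one_mul, mul_one]

lemma K2_mul_K1 : kron 1 (Km m ℓ) * kron (Km m ℓ) 1 = kron (Km m ℓ) (Km m ℓ) := by
  rw [kron_mul_kron, one_mul, mul_one]

lemma K2_mul_K2 : kron 1 (Km m ℓ) * kron 1 (Km m ℓ) = kron 1 (Kt m ℓ) := by
  rw [kron_mul_kron, one_mul, Km_mul_Km]

end prods

section master
variable (m : ℕ) (ℓ : Fin m → ℂ) (κ w s : ℂ)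

lemma mul_R_expand (M : Matrix (Fin m × Fin m) (Fin m × Fin m) ℂ) (u : ℂ) :
    M * Rmat m κ u = M + u⁻¹ • (M * Pm m) - (u + κ)⁻¹ • (M * Qm m) := by
  rw [Rmat, mul_sub, mul_add, mul_one, mul_smul_comm, mul_smul_comm]

lemma masterA (hm : Even m) :
    Rmat m κ w * kron (Km m ℓ) 1 * Rmat m κ s * kron 1 (Km m ℓ)
      = kron (Km m ℓ) (Km m ℓ) + w⁻¹ • (kron (Km m ℓ) (Km m ℓ) * Pm m)
        + s⁻¹ • (Pm m * kron 1 (Kt m ℓ)) + (s⁻¹ * w⁻¹) • kron 1 (Kt m ℓ)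
        - ((w + κ)⁻¹ + s⁻¹ * (w + κ)⁻¹) • E1 m ℓ
        - ((s + κ)⁻¹ * (1 + w⁻¹)) • Nm m ℓ := by
  have step1 : Rmat m κ w * kron (Km m ℓ) 1
      = kron (Km m ℓ) 1 + w⁻¹ • (kron 1 (Km m ℓ) * Pm m) - (w + κ)⁻¹ • QK m ℓ := by
    rw [Rmat, sub_mul, add_mul, one_mul, smul_mul_assoc, smul_mul_assoc,
      P_mul_kron1, Q_mul_K1]
  have stepP : (kron (Km m ℓ) 1 + w⁻¹ • (kron 1 (Km m ℓ) * Pm m) - (w + κ)⁻¹ • QK m ℓ) * Pm m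
      = Pm m * kron 1 (Km m ℓ) + w⁻¹ • kron 1 (Km m ℓ) - (w + κ)⁻¹ • QK m ℓ := by
    rw [sub_mul, add_mul, smul_mul_assoc, smul_mul_assoc, mul_assoc, P_mul_P, mul_one,
      QK_mul_P, ← P_mul_kron2]
  have stepQ : (kron (Km m ℓ) 1 + w⁻¹ • (kron 1 (Km m ℓ) * Pm m) - (w + κ)⁻¹ • QK m ℓ) * Qm m
      = KQ m ℓ + w⁻¹ • KQ m ℓ := by
    rw [sub_mul, add_mul, smul_mul_assoc, smul_mul_assoc, mul_assoc, P_mul_Q,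
      QK_mul_Q m ℓ hm, K1_mul_Q, K2_mul_Q, smul_zero, sub_zero]
  have step2 : Rmat m κ w * kron (Km m ℓ) 1 * Rmat m κ s
      = (kron (Km m ℓ) 1 + w⁻¹ • (kron 1 (Km m ℓ) * Pm m) - (w + κ)⁻¹ • QK m ℓ)
        + s⁻¹ • (Pm m * kron 1 (Km m ℓ) + w⁻¹ • kron 1 (Km m ℓ) - (w + κ)⁻¹ • QK m ℓ)
        - (s + κ)⁻¹ • (KQ m ℓ + w⁻¹ • KQ m ℓ) := by
    rw [step1, Rmat, mul_sub, mul_add, mul_one, mul_smul_comm, mul_smul_comm, stepP, stepQ]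
  rw [step2]
  simp only [sub_mul, add_mul, smul_mul_assoc]
  rw [K1_mul_K2, QK_mul_K2, KQ_mul_K2,
    mul_assoc (kron 1 (Km m ℓ)) (Pm m), P_mul_kron2, ← mul_assoc, K2_mul_K1,
    ← P_mul_kron2, mul_assoc (Pm m)]
  simp only [K2_mul_K2]
  module

lemma masterB (hm : Even m) :
    kron 1 (Km m ℓ) * Rmat m κ s * kron (Km m ℓ) 1 * Rmat m κ w
      = kron (Km m ℓ) (Km m ℓ) + w⁻¹ • (kron (Km m ℓ) (Km m ℓ) * Pm m)
        + s⁻¹ • (kron 1 (Kt m ℓ) * Pm m) + (s⁻¹ * w⁻¹) • kron 1 (Kt m ℓ)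
        - ((w + κ)⁻¹ + s⁻¹ * (w + κ)⁻¹) • E2 m ℓ
        - ((s + κ)⁻¹ * (1 + w⁻¹)) • Nm m ℓ := by
  have step1 : kron 1 (Km m ℓ) * Rmat m κ s
      = kron 1 (Km m ℓ) + s⁻¹ • (kron 1 (Km m ℓ) * Pm m) - (s + κ)⁻¹ • KQ m ℓ := by
    rw [Rmat, mul_sub, mul_add, mul_one, mul_smul_comm, mul_smul_comm, K2_mul_Q]
  have step2 : kron 1 (Km m ℓ) * Rmat m κ s * kron (Km m ℓ) 1
      = kron (Km m ℓ) (Km m ℓ) + s⁻¹ • (kron 1 (Kt m ℓ) * Pm m) - (s + κ)⁻¹ • Nm m ℓ := by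
    rw [step1, sub_mul, add_mul, smul_mul_assoc, smul_mul_assoc, K2_mul_K1, KQ_mul_K1,
      mul_assoc (kron 1 (Km m ℓ)) (Pm m), P_mul_kron1, ← mul_assoc, K2_mul_K2]
  have stepP : (kron (Km m ℓ) (Km m ℓ) + s⁻¹ • (kron 1 (Kt m ℓ) * Pm m) - (s + κ)⁻¹ • Nm m ℓ) * Pm m
      = kron (Km m ℓ) (Km m ℓ) * Pm m + s⁻¹ • kron 1 (Kt m ℓ) - (s + κ)⁻¹ • Nm m ℓ := by
    rw [sub_mul, add_mul, smul_mul_assoc, smul_mul_assoc, mul_assoc, P_mul_P, mul_one, N_mul_P]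
  have stepQ : (kron (Km m ℓ) (Km m ℓ) + s⁻¹ • (kron 1 (Kt m ℓ) * Pm m) - (s + κ)⁻¹ • Nm m ℓ) * Qm m
      = E2 m ℓ + s⁻¹ • E2 m ℓ := by
    rw [sub_mul, add_mul, smul_mul_assoc, smul_mul_assoc, mul_assoc, P_mul_Q, C_mul_Q,
      S_mul_Q, N_mul_Q m ℓ hm, smul_zero, sub_zero]
  rw [mul_R_expand, step2, stepP, stepQ]
  module

lemma E1_eq_E2 (heq : ∀ i j : Fin m, ℓ i * ℓ (barso m i) = ℓ j * ℓ (barso m j)) :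
    E1 m ℓ = E2 m ℓ := by
  ext r c
  simp only [E1, E2]
  split_ifs
  · exact heq c.1 r.1
  · rfl

lemma PS_comm (heq : ∀ i j : Fin m, ℓ i * ℓ (barso m i) = ℓ j * ℓ (barso m j)) :
    Pm m * kron 1 (Kt m ℓ) = kron 1 (Kt m ℓ) * Pm m := by
  ext ⟨a,b⟩ ⟨c,d⟩
  rw [P_mul_apply, mul_P_apply]
  simp only [kron, one_apply, Kt]
  split_ifs <;> simp_all <;> first | exact heq _ _ | (exfalso; simp_all [eq_comm])

end master

/-- For `m` even, a constant antidiagonal matrix `K = Σ_i ℓ_i E_{i,ī}` with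
all `ℓ_i ≠ 0` solves the reflection equation for the `so(m)` rational R
matrix (`2κ = m − 2`) if and only if the products `ℓ_i ℓ_ī` are all equal;
moreover if all products are normalized to `1`, `K` is a solution. -/
theorem antidiagonal_solutions (m : ℕ) (hm : Even m) (κ : ℂ)
    (hκ : 2 * κ = (m : ℂ) - 2)
    (ℓ : Fin m → ℂ) (hℓ : ∀ i, ℓ i ≠ 0) :
    (ConstSol m κ (∑ i : Fin m, ℓ i • single i (barso m i) (1 : ℂ)) ↔
        ∀ i j : Fin m, ℓ i * ℓ (barso m i) = ℓ j * ℓ (barso m j)) ∧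
      ((∀ i : Fin m, ℓ i * ℓ (barso m i) = 1) →
        ConstSol m κ (∑ i : Fin m, ℓ i • single i (barso m i) (1 : ℂ))) := by
  have hK : (∑ i : Fin m, ℓ i • single i (barso m i) (1:ℂ)) = Km m ℓ := rfl
  rw [hK]
  have backward : (∀ i j : Fin m, ℓ i * ℓ (barso m i) = ℓ j * ℓ (barso m j)) →
      ConstSol m κ (Km m ℓ) := by
    intro heq u v h1 h2 h3 h4
    rw [masterA m ℓ κ (u - v) (u + v) hm, masterB m ℓ κ (u - v) (u + v) hm,
      PS_comm m ℓ heq, E1_eq_E2 m ℓ heq]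
  have forward : ConstSol m κ (Km m ℓ) →
      ∀ i j : Fin m, ℓ i * ℓ (barso m i) = ℓ j * ℓ (barso m j) := by
    intro hsol i j
    by_cases hj : j = barso m i
    · subst hj; rw [barbar]; ring
    · by_cases hij0 : i = j
      · subst hij0; rfl
      · have hm0 : m ≠ 0 := by have := i.pos; omega
        have hmC : (m:ℂ) ≠ 0 := Nat.cast_ne_zero.mpr hm0
        have hk1 : (1:ℂ) + κ ≠ 0 := by
          intro h; apply hmC; linear_combination (-1 : ℂ) * hκ + 2 * h
        have h0 := hsol 1 0 (by norm_num) (by norm_num) (by simpa using hk1) (by simpa using hk1)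
        rw [masterA m ℓ κ (1 - 0) (1 + 0) hm, masterB m ℓ κ (1 - 0) (1 + 0) hm] at h0
        have hij : ¬ i = barso m j := fun h => hj (by rw [h, barbar])
        have hbi : ¬ i = barso m i := fun h => bar_ne m hm i h.symm
        have hbj : ¬ j = barso m j := fun h => bar_ne m hm j h.symm
        have h1 := congrFun (congrFun h0 (i, j)) (j, i)
        simp only [Matrix.add_apply, Matrix.sub_apply, Matrix.smul_apply, smul_eq_mul, mul_P_apply, P_mul_apply,
          kron, E1, E2, Nm, Kt, Kapp, one_apply] at h1
        simp only [hj, hij, hbi, hbj, hij0, if_false, if_true, and_false, false_and,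
          mul_zero, zero_mul, mul_one, one_mul, if_pos rfl] at h1
        norm_num at h1
        linear_combination h1
  exact ⟨⟨forward, backward⟩, fun hnorm => backward (fun i j => by rw [hnorm i, hnorm j])⟩

end RefClass15
end

section
/- Consider the constraints for constant mixed reflection matrices of osp(1|n) (n even, n ≥ 2): k₁² − k_i² − ℓ_iℓ_ī = 0 and k₁² − k_i k_ī − ℓ_iℓ_ī = 0 for 2 ≤ i ≤ 1+n, together with k_i = −k_ī for 2 ≤ i ≤ 1+n and ℓ_i · Str K = 0. Then any solution has k_i = 0 for all i (including k₁ = 0 whenever some ℓ_i ≠ 0), hence there is no invertible mixed or antidiagonal reflection matrix for osp(1|n). -/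
namespace RefClass17

/-- The involution on the indices of `osp(1|n)`: index `0` (the orthogonal
index) is fixed, and the symplectic indices `1,…,n` (0-based) are paired by
`i ↦ n + 1 − i` (1-based: `ī = n + 3 − i` on `2 ≤ i ≤ n + 1`). -/
def bar (n : ℕ) (i : Fin (n + 1)) : Fin (n + 1) :=
  if h : i = 0 then 0
  else ⟨n + 1 - (i : ℕ), by
    have h1 := i.isLt
    have h2 : (i : ℕ) ≠ 0 := fun hc => h (Fin.ext hc)
    omega⟩

/-- Constraints for constant mixed reflection matrices of `osp(1|n)`
(`n` even, `n ≥ 2`): from `k₁² − k_i² − ℓ_iℓ_ī = 0`,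
`k₁² − k_i k_ī − ℓ_iℓ_ī = 0`, `k_i = −k_ī` for `2 ≤ i ≤ 1 + n`, and
`ℓ_i · Str K = 0` (where `Str K = k₁ − Σ_{i≥2} k_i`), it follows that all
`k_i` with `i ≥ 2` vanish, and `k₁ = 0` whenever some `ℓ_i ≠ 0`; hence there
is no invertible mixed or antidiagonal reflection matrix for `osp(1|n)`. -/
theorem osp1n_no_mixed (n : ℕ) (hn : Even n) (hn2 : 2 ≤ n)
    (k ℓ : Fin (n + 1) → ℂ)
    (h1 : ∀ i : Fin (n + 1), i ≠ 0 →
      k 0 ^ 2 - k i ^ 2 - ℓ i * ℓ (bar n i) = 0)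
    (h2 : ∀ i : Fin (n + 1), i ≠ 0 →
      k 0 ^ 2 - k i * k (bar n i) - ℓ i * ℓ (bar n i) = 0)
    (h3 : ∀ i : Fin (n + 1), i ≠ 0 → k i = - k (bar n i))
    (h4 : ∀ i : Fin (n + 1),
      ℓ i * (k 0 - ∑ j ∈ Finset.univ.filter (· ≠ (0 : Fin (n + 1))), k j) = 0) :
    (∀ i : Fin (n + 1), i ≠ 0 → k i = 0) ∧
      ((∃ i, ℓ i ≠ 0) → k 0 = 0) := by
  have hk : ∀ i : Fin (n + 1), i ≠ 0 → k i = 0 := by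
    intro i hi
    have e1 := h1 i hi
    have e2 := h2 i hi
    have e3 := h3 i hi
    have : k i ^ 2 = 0 := by linear_combination (e2 - e1) / 2 + k i / 2 * e3
    exact pow_eq_zero_iff (n := 2) (by norm_num) |>.mp this
  refine ⟨hk, fun ⟨i, hi⟩ => ?_⟩
  have hsum : ∑ j ∈ Finset.univ.filter (· ≠ (0 : Fin (n + 1))), k j = 0 := by
    apply Finset.sum_eq_zero
    intro j hj
    exact hk j (Finset.mem_filter.mp hj).2
  have := h4 i
  rw [hsum, sub_zero] at this
  exact (mul_eq_zero.mp this).resolve_left hi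

end RefClass17
end

section
/- For the so(2k+1) Bethe kernel K̂, the vector ε̂ with components ε̂^j(ω) = cosh((k−1/2−j)ω/2)/cosh((k−1/2)ω/2) for j = 1,…,k−1 and ε̂^k(ω) = 1/(2cosh((k−1/2)ω/2)) satisfies Σ_l K̂_{jl}(ω) ε̂^l(ω) = e^{−ω/2} δ_{j1} for all j = 1,…,k. -/
namespace RefClass19

open Matrix

/-- The inverse Bethe kernel `R̂(ω)` of the `so(2k+1)` open spin chain
(indices are 1-based in the references; here `i : Fin k` stands for the
1-based index `i + 1`). -/
noncomputable def Rhat (k : ℕ) (ω : ℂ) : Matrix (Fin k) (Fin k) ℂ :=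
  fun i j =>
    let a : ℕ := (i : ℕ) + 1
    let b : ℕ := (j : ℕ) + 1
    let D : ℂ := Complex.cosh (((k : ℂ) - 1 / 2) * ω / 2) * Complex.sinh (ω / 2)
    if a = k ∧ b = k then
      (Complex.exp (ω / 2) / 2) * Complex.sinh ((k : ℂ) * ω / 2) /
        (2 * Complex.cosh (ω / 4) * D)
    else if a = k ∨ b = k then
      (Complex.exp (ω / 2) / 2) * Complex.sinh (((min a b : ℕ) : ℂ) * ω / 2) / D
    else
      Complex.exp (ω / 2) * Complex.sinh (((min a b : ℕ) : ℂ) * ω / 2) *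
        Complex.cosh (((k : ℂ) - 1 / 2 - ((max a b : ℕ) : ℂ)) * ω / 2) / D

/-- The Bethe-Ansatz kernel `K̂(ω)` of the `so(2k+1)` open spin chain:
`K̂_{ij} = (1+e^{−ω})δ_{ij} − e^{−ω/2}(δ_{i,j+1}+δ_{i,j−1})` for
`i, j ≤ k−1`, `K̂_{k−1,k} = K̂_{k,k−1} = −(e^{−ω/4}+e^{−3ω/4})`,
`K̂_{kk} = 1 + 2e^{−ω/2} + e^{−ω}`, all other entries zero. -/
noncomputable def Khat (k : ℕ) (ω : ℂ) : Matrix (Fin k) (Fin k) ℂ :=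
  fun i j =>
    let a : ℕ := (i : ℕ) + 1
    let b : ℕ := (j : ℕ) + 1
    if a = k ∧ b = k then 1 + 2 * Complex.exp (-ω / 2) + Complex.exp (-ω)
    else if (a + 1 = k ∧ b = k) ∨ (a = k ∧ b + 1 = k) then
      -(Complex.exp (-ω / 4) + Complex.exp (-(3 * ω) / 4))
    else if a < k ∧ b < k then
      (if i = j then 1 + Complex.exp (-ω) else 0) -
        Complex.exp (-ω / 2) *
          ((if a = b + 1 then 1 else 0) + (if b = a + 1 then 1 else 0))
    else 0

/-- The hole pseudo-energies of the `so(2k+1)` open chain: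
`ε̂^j(ω) = cosh((k−1/2−j)ω/2)/cosh((k−1/2)ω/2)` for `j = 1,…,k−1` and
`ε̂^k(ω) = 1/(2cosh((k−1/2)ω/2))` (again `j : Fin k` is the 1-based index
`j + 1`). -/
noncomputable def epshat (k : ℕ) (ω : ℂ) (j : Fin k) : ℂ :=
  if (j : ℕ) + 1 = k then 1 / (2 * Complex.cosh (((k : ℂ) - 1 / 2) * ω / 2))
  else Complex.cosh (((k : ℂ) - 1 / 2 - (((j : ℕ) : ℂ) + 1)) * ω / 2) /
    Complex.cosh (((k : ℂ) - 1 / 2) * ω / 2)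

/-! ### auxiliary lemmas -/

lemma coshdef' (z : ℂ) : Complex.cosh z = (Complex.exp z + Complex.exp (-z)) / 2 := rfl

lemma expinv' (w : ℂ) : Complex.exp w * Complex.exp (-w) = 1 := by
  rw [← Complex.exp_add]; simp

lemma exppow' (x y : ℂ) (n : ℕ) (h : x = n * y) :
    Complex.exp x = Complex.exp y ^ n := by
  rw [h, Complex.exp_nat_mul]

lemma expsplit' (x y z : ℂ) (h : x = y + z) :
    Complex.exp x = Complex.exp y * Complex.exp z := by
  rw [h, Complex.exp_add]

lemma keyA' (ω : ℂ) :
    (1 + 2 * Complex.exp (-ω / 2) + Complex.exp (-ω)) * (1 / 2)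
      - (Complex.exp (-ω / 4) + Complex.exp (-(3 * ω) / 4)) * Complex.cosh (ω / 4) = 0 := by
  rw [coshdef' (ω/4),
    exppow' (-ω) (-(ω/4)) 4 (by push_cast; ring),
    exppow' (-ω/2) (-(ω/4)) 2 (by push_cast; ring),
    exppow' (-ω/4) (-(ω/4)) 1 (by push_cast; ring),
    exppow' (-(3*ω)/4) (-(ω/4)) 3 (by push_cast; ring)]
  linear_combination (-(1 + Complex.exp (-(ω/4))^2)/2) * expinv' (ω/4)

lemma keyB' (ω : ℂ) :
    -Complex.exp (-ω / 2) * Complex.cosh (3 * ω / 4)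
      + (1 + Complex.exp (-ω)) * Complex.cosh (ω / 4)
      - (Complex.exp (-ω / 4) + Complex.exp (-(3 * ω) / 4)) * (1 / 2) = 0 := by
  rw [coshdef' (ω/4), coshdef' (3*ω/4),
    exppow' (-ω) (-(ω/4)) 4 (by push_cast; ring),
    exppow' (-ω/2) (-(ω/4)) 2 (by push_cast; ring),
    exppow' (-ω/4) (-(ω/4)) 1 (by push_cast; ring),
    exppow' (-(3*ω)/4) (-(ω/4)) 3 (by push_cast; ring),
    exppow' (-(3*ω/4)) (-(ω/4)) 3 (by push_cast; ring),
    exppow' (3*ω/4) (ω/4) 3 (by push_cast; ring)]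
  linear_combination ((-(Complex.exp (ω/4))^2 * Complex.exp (-(ω/4)) - Complex.exp (ω/4)
    + Complex.exp (-(ω/4))^3)/2) * expinv' (ω/4)

lemma keyC' (ω : ℂ) :
    (1 + Complex.exp (-ω)) * Complex.cosh (ω / 4)
      - (Complex.exp (-ω / 4) + Complex.exp (-(3 * ω) / 4)) * (1 / 2)
      = Complex.exp (-ω / 2) * Complex.cosh (3 * ω / 4) := by
  linear_combination keyB' ω

lemma keyD' (t ω : ℂ) :
    (1 + Complex.exp (-ω)) * Complex.cosh t
      - Complex.exp (-ω / 2) * (Complex.cosh (t + ω / 2) + Complex.cosh (t - ω / 2)) = 0 := by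
  rw [coshdef' t, coshdef' (t + ω/2), coshdef' (t - ω/2),
    exppow' (-ω) (-(ω/2)) 2 (by push_cast; ring),
    exppow' (-ω/2) (-(ω/2)) 1 (by push_cast; ring),
    expsplit' (t + ω/2) t (ω/2) (by ring),
    expsplit' (-(t + ω/2)) (-t) (-(ω/2)) (by ring),
    expsplit' (t - ω/2) t (-(ω/2)) (by ring),
    expsplit' (-(t - ω/2)) (-t) (ω/2) (by ring)]
  linear_combination (-(Complex.exp t + Complex.exp (-t))/2) * expinv' (ω/2)

lemma keyE' (t ω : ℂ) :
    (1 + Complex.exp (-ω)) * Complex.cosh t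
      - Complex.exp (-ω / 2) * Complex.cosh (t - ω / 2)
      = Complex.exp (-ω / 2) * Complex.cosh (t + ω / 2) := by
  linear_combination keyD' t ω

lemma sum_two' {k : ℕ} (f : Fin k → ℂ) (p q : Fin k) (hpq : p ≠ q)
    (h0 : ∀ l, l ≠ p → l ≠ q → f l = 0) : ∑ l, f l = f p + f q := by
  rw [← Finset.sum_subset (Finset.subset_univ ({p, q} : Finset (Fin k)))
    (fun x _ hx => by
      simp only [Finset.mem_insert, Finset.mem_singleton, not_or] at hx
      exact h0 x hx.1 hx.2)]
  exact Finset.sum_pair hpq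

lemma sum_three' {k : ℕ} (f : Fin k → ℂ) (p q r : Fin k) (hpq : p ≠ q) (hpr : p ≠ r)
    (hqr : q ≠ r) (h0 : ∀ l, l ≠ p → l ≠ q → l ≠ r → f l = 0) :
    ∑ l, f l = f p + f q + f r := by
  rw [← Finset.sum_subset (Finset.subset_univ ({p, q, r} : Finset (Fin k)))
    (fun x _ hx => by
      simp only [Finset.mem_insert, Finset.mem_singleton, not_or] at hx
      exact h0 x hx.1 hx.2.1 hx.2.2)]
  rw [show ({p, q, r} : Finset (Fin k)) = insert p {q, r} from rfl,
    Finset.sum_insert (by simp [hpq, hpr]), Finset.sum_pair hqr, add_assoc]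

variable (k : ℕ) (ω : ℂ)

lemma Khat_kk (j : Fin k) (h : (j:ℕ)+1 = k) :
    Khat k ω j j = 1 + 2 * Complex.exp (-ω / 2) + Complex.exp (-ω) := by
  simp only [Khat]
  rw [if_pos ⟨h, h⟩]

lemma Khat_edge (i l : Fin k)
    (h : ((i:ℕ)+2 = k ∧ (l:ℕ)+1 = k) ∨ ((i:ℕ)+1 = k ∧ (l:ℕ)+2 = k)) :
    Khat k ω i l = -(Complex.exp (-ω / 4) + Complex.exp (-(3 * ω) / 4)) := by
  simp only [Khat]
  rw [if_neg (by omega), if_pos (by omega)]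

lemma Khat_diag (i : Fin k) (h : (i:ℕ)+1 < k) :
    Khat k ω i i = 1 + Complex.exp (-ω) := by
  simp only [Khat]
  rw [if_neg (by omega), if_neg (by omega), if_pos ⟨(by omega : (i:ℕ)+1 < k), by omega⟩]
  split_ifs with h1 h2
  · exfalso; omega
  · ring
  · exfalso; omega
  · ring

lemma Khat_offdiag (i l : Fin k) (hi : (i:ℕ)+1 < k) (hl : (l:ℕ)+1 < k)
    (hadj : (i:ℕ) = (l:ℕ)+1 ∨ (l:ℕ) = (i:ℕ)+1) :
    Khat k ω i l = -Complex.exp (-ω / 2) := by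
  simp only [Khat]
  rw [if_neg (by omega), if_neg (by omega), if_pos ⟨by omega, by omega⟩,
    if_neg (by rw [Fin.ext_iff]; omega)]
  rcases hadj with h | h
  · rw [if_pos (by omega), if_neg (by omega)]; ring
  · rw [if_neg (by omega), if_pos (by omega)]; ring

lemma Khat_zero (i l : Fin k) (hne : (i:ℕ) ≠ (l:ℕ)) (h1 : (i:ℕ) ≠ (l:ℕ)+1)
    (h2 : (l:ℕ) ≠ (i:ℕ)+1) (he1 : ¬((i:ℕ)+2 = k ∧ (l:ℕ)+1 = k))
    (he2 : ¬((i:ℕ)+1 = k ∧ (l:ℕ)+2 = k)) :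
    Khat k ω i l = 0 := by
  simp only [Khat]
  rw [if_neg (by omega), if_neg (by omega),
    if_neg (show ¬ i = l by rw [Fin.ext_iff]; omega),
    if_neg (show ¬ (i:ℕ)+1 = (l:ℕ)+1+1 by omega),
    if_neg (show ¬ (l:ℕ)+1 = (i:ℕ)+1+1 by omega)]
  split_ifs <;> ring

lemma eps_last (l : Fin k) (h : (l:ℕ)+1 = k) :
    epshat k ω l = 1 / (2 * Complex.cosh (((k : ℂ) - 1 / 2) * ω / 2)) := by
  simp only [epshat]; rw [if_pos h]

lemma eps_mid (l : Fin k) (h : (l:ℕ)+1 ≠ k) :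
    epshat k ω l = Complex.cosh (((k : ℂ) - 1 / 2 - (((l : ℕ) : ℂ) + 1)) * ω / 2) /
      Complex.cosh (((k : ℂ) - 1 / 2) * ω / 2) := by
  simp only [epshat]; rw [if_neg h]

/-- `K̂ ε̂ = e^{−ω/2} e₁`: the vector of hole pseudo-energies satisfies
`Σ_l K̂_{jl}(ω) ε̂^l(ω) = e^{−ω/2} δ_{j1}`, as an identity of hyperbolic
functions of `ω`, for each integer `k ≥ 2`. -/
theorem Khat_mulVec_epshat (k : ℕ) (hk : 2 ≤ k) (ω : ℂ)
    (h2 : Complex.cosh (((k : ℂ) - 1 / 2) * ω / 2) ≠ 0) :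
    ∀ j : Fin k, ∑ l : Fin k, Khat k ω j l * epshat k ω l
      = Complex.exp (-ω / 2) * (if (j : ℕ) = 0 then 1 else 0) := by
  intro j
  have hjlt := j.isLt
  set C := Complex.cosh (((k : ℂ) - 1 / 2) * ω / 2) with hC
  by_cases hA : (j:ℕ) + 1 = k
  · -- last row
    rw [if_neg (by omega), mul_zero]
    have hq : k - 2 < k := by omega
    rw [sum_two' (fun l => Khat k ω j l * epshat k ω l) ⟨k-2, hq⟩ j
      (fun h => by rw [Fin.ext_iff] at h; simp only [Fin.val_mk] at h; omega)
      (fun l hl1 hl2 => by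
        show Khat k ω j l * epshat k ω l = 0
        have hv1 : (l:ℕ) ≠ k-2 := fun hh => hl1 (Fin.ext hh)
        have hv2 : (l:ℕ) ≠ (j:ℕ) := fun hh => hl2 (Fin.ext hh)
        have := l.isLt
        rw [Khat_zero k ω j l (by omega) (by omega) (by omega) (by omega) (by omega),
          zero_mul])]
    show Khat k ω j ⟨k-2, hq⟩ * epshat k ω ⟨k-2, hq⟩ + Khat k ω j j * epshat k ω j = 0
    rw [Khat_edge k ω j ⟨k-2, hq⟩ (Or.inr ⟨hA, (show k-2+2 = k by omega : _)⟩),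
      Khat_kk k ω j hA, eps_last k ω j hA,
      eps_mid k ω ⟨k-2, hq⟩ (show k-2+1 ≠ k by omega : _)]
    simp only [Fin.val_mk]
    rw [show (((k-2 : ℕ)) : ℂ) = (k:ℂ) - 2 by rw [Nat.cast_sub hk]; norm_num]
    rw [show ((k:ℂ) - 1/2 - (((k:ℂ) - 2) + 1)) * ω / 2 = ω/4 by ring]
    linear_combination (1 / C) * keyA' ω
  · by_cases hB : (j:ℕ) + 2 = k
    · by_cases hj1 : 1 ≤ (j:ℕ)
      · -- row k-1, k ≥ 3
        rw [if_neg (by omega), mul_zero]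
        have hp : (j:ℕ) - 1 < k := by omega
        have hr : k - 1 < k := by omega
        rw [sum_three' (fun l => Khat k ω j l * epshat k ω l) ⟨(j:ℕ)-1, hp⟩ j ⟨k-1, hr⟩
          (fun h => by rw [Fin.ext_iff] at h; simp only [Fin.val_mk] at h; omega)
          (fun h => by rw [Fin.ext_iff] at h; simp only [Fin.val_mk] at h; omega)
          (fun h => by rw [Fin.ext_iff] at h; simp only [Fin.val_mk] at h; omega)
          (fun l hl1 hl2 hl3 => by
            show Khat k ω j l * epshat k ω l = 0
            have hv1 : (l:ℕ) ≠ (j:ℕ)-1 := fun hh => hl1 (Fin.ext hh)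
            have hv2 : (l:ℕ) ≠ (j:ℕ) := fun hh => hl2 (Fin.ext hh)
            have hv3 : (l:ℕ) ≠ k-1 := fun hh => hl3 (Fin.ext hh)
            have := l.isLt
            rw [Khat_zero k ω j l (by omega) (by omega) (by omega) (by omega) (by omega),
              zero_mul])]
        show Khat k ω j ⟨(j:ℕ)-1, hp⟩ * epshat k ω ⟨(j:ℕ)-1, hp⟩
          + Khat k ω j j * epshat k ω j + Khat k ω j ⟨k-1, hr⟩ * epshat k ω ⟨k-1, hr⟩ = 0
        rw [Khat_offdiag k ω j ⟨(j:ℕ)-1, hp⟩ (by omega) (show (j:ℕ)-1+1 < k by omega : _)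
            (Or.inl (show (j:ℕ) = ((j:ℕ)-1)+1 by omega : _)),
          eps_mid k ω ⟨(j:ℕ)-1, hp⟩ (show (j:ℕ)-1+1 ≠ k by omega : _),
          Khat_diag k ω j (by omega), eps_mid k ω j (by omega),
          Khat_edge k ω j ⟨k-1, hr⟩ (Or.inl ⟨hB, (show k-1+1 = k by omega : _)⟩),
          eps_last k ω ⟨k-1, hr⟩ (show k-1+1 = k by omega : _)]
        simp only [Fin.val_mk]
        rw [show (((j:ℕ)-1 : ℕ) : ℂ) = (k:ℂ) - 3 by
            rw [show (j:ℕ)-1 = k-3 by omega, Nat.cast_sub (by omega : 3 ≤ k)]; norm_num,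
          show (((j:ℕ)) : ℂ) = (k:ℂ) - 2 by
            rw [show (j:ℕ) = k-2 by omega, Nat.cast_sub hk]; norm_num,
          show ((k:ℂ) - 1/2 - (((k:ℂ) - 3) + 1)) * ω / 2 = 3*ω/4 by ring,
          show ((k:ℂ) - 1/2 - (((k:ℂ) - 2) + 1)) * ω / 2 = ω/4 by ring]
        linear_combination (1 / C) * keyB' ω
      · -- k = 2, first row
        have hj0 : (j:ℕ) = 0 := by omega
        rw [if_pos hj0, mul_one]
        have hr : k - 1 < k := by omega
        rw [sum_two' (fun l => Khat k ω j l * epshat k ω l) j ⟨k-1, hr⟩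
          (fun h => by rw [Fin.ext_iff] at h; simp only [Fin.val_mk] at h; omega)
          (fun l hl1 hl2 => by
            show Khat k ω j l * epshat k ω l = 0
            have hv1 : (l:ℕ) ≠ (j:ℕ) := fun hh => hl1 (Fin.ext hh)
            have hv2 : (l:ℕ) ≠ k-1 := fun hh => hl2 (Fin.ext hh)
            have := l.isLt
            rw [Khat_zero k ω j l (by omega) (by omega) (by omega) (by omega) (by omega),
              zero_mul])]
        show Khat k ω j j * epshat k ω j + Khat k ω j ⟨k-1, hr⟩ * epshat k ω ⟨k-1, hr⟩ = _
        rw [Khat_diag k ω j (by omega), eps_mid k ω j (by omega),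
          Khat_edge k ω j ⟨k-1, hr⟩ (Or.inl ⟨by omega, (show k-1+1 = k by omega : _)⟩),
          eps_last k ω ⟨k-1, hr⟩ (show k-1+1 = k by omega : _)]
        have hk2 : k = 2 := by omega
        rw [show ((k:ℂ) - 1/2 - ((((j:ℕ)):ℂ) + 1)) * ω / 2 = ω/4 by
          rw [show (((j:ℕ)):ℂ) = 0 by rw [hj0]; norm_num,
            show ((k:ℕ):ℂ) = 2 by rw [hk2]; norm_num]; ring]
        have key := keyC' ω
        have hCC : C = Complex.cosh (3 * ω / 4) := by
          rw [hC, show ((k:ℂ) - 1/2) * ω / 2 = 3*ω/4 by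
            rw [show ((k:ℕ):ℂ) = 2 by rw [hk2]; norm_num]; ring]
        rw [← hCC] at key
        linear_combination (1 / C) * key + Complex.exp (-ω/2) * mul_inv_cancel₀ h2
    · by_cases hj1 : 1 ≤ (j:ℕ)
      · -- generic interior row
        rw [if_neg (by omega), mul_zero]
        have hp : (j:ℕ) - 1 < k := by omega
        have hr : (j:ℕ) + 1 < k := by omega
        rw [sum_three' (fun l => Khat k ω j l * epshat k ω l) ⟨(j:ℕ)-1, hp⟩ j ⟨(j:ℕ)+1, hr⟩
          (fun h => by rw [Fin.ext_iff] at h; simp only [Fin.val_mk] at h; omega)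
          (fun h => by rw [Fin.ext_iff] at h; simp only [Fin.val_mk] at h; omega)
          (fun h => by rw [Fin.ext_iff] at h; simp only [Fin.val_mk] at h; omega)
          (fun l hl1 hl2 hl3 => by
            show Khat k ω j l * epshat k ω l = 0
            have hv1 : (l:ℕ) ≠ (j:ℕ)-1 := fun hh => hl1 (Fin.ext hh)
            have hv2 : (l:ℕ) ≠ (j:ℕ) := fun hh => hl2 (Fin.ext hh)
            have hv3 : (l:ℕ) ≠ (j:ℕ)+1 := fun hh => hl3 (Fin.ext hh)
            have := l.isLt
            rw [Khat_zero k ω j l (by omega) (by omega) (by omega) (by omega) (by omega),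
              zero_mul])]
        show Khat k ω j ⟨(j:ℕ)-1, hp⟩ * epshat k ω ⟨(j:ℕ)-1, hp⟩
          + Khat k ω j j * epshat k ω j
          + Khat k ω j ⟨(j:ℕ)+1, hr⟩ * epshat k ω ⟨(j:ℕ)+1, hr⟩ = 0
        rw [Khat_offdiag k ω j ⟨(j:ℕ)-1, hp⟩ (by omega) (show (j:ℕ)-1+1 < k by omega : _)
            (Or.inl (show (j:ℕ) = ((j:ℕ)-1)+1 by omega : _)),
          eps_mid k ω ⟨(j:ℕ)-1, hp⟩ (show (j:ℕ)-1+1 ≠ k by omega : _),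
          Khat_diag k ω j (by omega), eps_mid k ω j (by omega),
          Khat_offdiag k ω j ⟨(j:ℕ)+1, hr⟩ (by omega) (show (j:ℕ)+1+1 < k by omega : _)
            (Or.inr (show (j:ℕ)+1 = (j:ℕ)+1 by omega : _)),
          eps_mid k ω ⟨(j:ℕ)+1, hr⟩ (show (j:ℕ)+1+1 ≠ k by omega : _)]
        simp only [Fin.val_mk]
        rw [show (((j:ℕ)-1 : ℕ) : ℂ) = (((j:ℕ)):ℂ) - 1 by
            rw [Nat.cast_sub (by omega : 1 ≤ (j:ℕ))]; norm_num,
          show (((j:ℕ)+1 : ℕ) : ℂ) = (((j:ℕ)):ℂ) + 1 by push_cast; ring,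
          show ((k:ℂ) - 1/2 - (((((j:ℕ)):ℂ) - 1) + 1)) * ω / 2
            = ((k:ℂ) - 1/2 - ((((j:ℕ)):ℂ) + 1)) * ω / 2 + ω/2 by ring,
          show ((k:ℂ) - 1/2 - (((((j:ℕ)):ℂ) + 1) + 1)) * ω / 2
            = ((k:ℂ) - 1/2 - ((((j:ℕ)):ℂ) + 1)) * ω / 2 - ω/2 by ring]
        linear_combination (1 / C) * keyD' (((k:ℂ) - 1/2 - ((((j:ℕ)):ℂ) + 1)) * ω / 2) ω
      · -- first row, k ≥ 3
        have hj0 : (j:ℕ) = 0 := by omega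
        rw [if_pos hj0, mul_one]
        have hr : 1 < k := by omega
        rw [sum_two' (fun l => Khat k ω j l * epshat k ω l) j ⟨1, hr⟩
          (fun h => by rw [Fin.ext_iff] at h; simp only [Fin.val_mk] at h; omega)
          (fun l hl1 hl2 => by
            show Khat k ω j l * epshat k ω l = 0
            have hv1 : (l:ℕ) ≠ (j:ℕ) := fun hh => hl1 (Fin.ext hh)
            have hv2 : (l:ℕ) ≠ 1 := fun hh => hl2 (Fin.ext hh)
            have := l.isLt
            rw [Khat_zero k ω j l (by omega) (by omega) (by omega) (by omega) (by omega),
              zero_mul])]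
        show Khat k ω j j * epshat k ω j + Khat k ω j ⟨1, hr⟩ * epshat k ω ⟨1, hr⟩ = _
        rw [Khat_diag k ω j (by omega), eps_mid k ω j (by omega),
          Khat_offdiag k ω j ⟨1, hr⟩ (by omega) (show 1+1 < k by omega : _)
            (Or.inr (show (1:ℕ) = (j:ℕ)+1 by omega : _)),
          eps_mid k ω ⟨1, hr⟩ (show 1+1 ≠ k by omega : _)]
        simp only [Fin.val_mk]
        rw [show (((j:ℕ)):ℂ) = 0 by rw [hj0]; norm_num,
          show (((1:ℕ)):ℂ) = 1 by norm_num,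
          show ((k:ℂ) - 1/2 - ((1:ℂ) + 1)) * ω / 2
            = ((k:ℂ) - 1/2 - ((0:ℂ) + 1)) * ω / 2 - ω/2 by ring]
        have key := keyE' (((k:ℂ) - 1/2 - ((0:ℂ) + 1)) * ω / 2) ω
        rw [show ((k:ℂ) - 1/2 - ((0:ℂ) + 1)) * ω / 2 + ω/2 = ((k:ℂ) - 1/2) * ω / 2 by ring,
          ← hC] at key
        linear_combination (1 / C) * key + Complex.exp (-ω/2) * mul_inv_cancel₀ h2


end RefClass19
end
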